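/- If f : A → B is an n-homomorphism and g : A → B is an m-homomorphism, then the ℚ-linear map f + g is an (n+m)-homomorphism. -/

import Mathlib

/-! `exp` turns the sum `f̂(log(1+aT)) + ĝ(log(1+aT))` into a product, so
`R(f+g,a) = R(f,a) R(g,a)` and `ψ(f+g,a)` is the convolution of `ψ(f,a)` and `ψ(g,a)`;
a product of polynomials of degrees `≤ n` and `≤ m` has degree `≤ n + m`.
The exponential law holds modulo every `X ^ (k + 1)`: there a series without constant term
is nilpotent, `expPS` becomes `IsNilpotent.exp`, and that is additive on commuting nilpotents. -/

open PowerSeries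

noncomputable def logOneAdd {A : Type*} [CommRing A] [Algebra ℚ A] (a : A) : PowerSeries A :=
  PowerSeries.mk fun k => ((-1 : ℚ) ^ (k + 1) / k) • a ^ k

noncomputable def mapCoeff {A B : Type*} [CommRing A] [CommRing B] [Algebra ℚ A] [Algebra ℚ B]
    (f : A →ₗ[ℚ] B) (p : PowerSeries A) : PowerSeries B :=
  PowerSeries.mk fun k => f (PowerSeries.coeff k p)

noncomputable def expPS {B : Type*} [CommRing B] [Algebra ℚ B] (p : PowerSeries B) : PowerSeries B :=
  PowerSeries.mk fun k => ∑ m ∈ Finset.range (k + 1),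
    ((m.factorial : ℚ)⁻¹) • PowerSeries.coeff k (p ^ m)

noncomputable def charFun {A B : Type*} [CommRing A] [CommRing B] [Algebra ℚ A] [Algebra ℚ B]
    (f : A →ₗ[ℚ] B) (a : A) : PowerSeries B :=
  expPS (mapCoeff f (logOneAdd a))

noncomputable def psi {A B : Type*} [CommRing A] [CommRing B] [Algebra ℚ A] [Algebra ℚ B]
    (f : A →ₗ[ℚ] B) (a : A) (k : ℕ) : B :=
  PowerSeries.coeff k (charFun f a)

def IsNHom {A B : Type*} [CommRing A] [CommRing B] [Algebra ℚ A] [Algebra ℚ B]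
    (f : A →ₗ[ℚ] B) (n : ℕ) : Prop :=
  f 1 = n • (1 : B) ∧ ∀ k, n + 1 ≤ k → ∀ a : A, psi f a k = 0

noncomputable def frob {A B : Type*} [CommRing A] [CommRing B] [Algebra ℚ A] [Algebra ℚ B]
    (f : A →ₗ[ℚ] B) : (k : ℕ) → (Fin k → A) → B
  | 0, _ => 1
  | k + 1, a =>
      f (a (Fin.last k)) * frob f k (fun i => a i.castSucc)
        - ∑ i : Fin k, frob f k
            (Function.update (fun j : Fin k => a j.castSucc) i (a i.castSucc * a (Fin.last k)))

section Truncation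

variable {R : Type*} [CommRing R]

lemma coeff_pow_eq_zero_of_lt {p : PowerSeries R} (hp : constantCoeff p = 0) {k i : ℕ}
    (h : k < i) : coeff k (p ^ i) = 0 :=
  X_pow_dvd_iff.mp (pow_dvd_pow_of_dvd (X_dvd_iff.mpr hp) i) k h

lemma mk_span_X_pow_eq_mk_iff (k : ℕ) (a b : PowerSeries R) :
    Ideal.Quotient.mk (Ideal.span {X ^ (k + 1)}) a = Ideal.Quotient.mk _ b ↔
      ∀ j ≤ k, coeff j a = coeff j b := by
  simp only [Ideal.Quotient.eq, Ideal.mem_span_singleton, X_pow_dvd_iff, map_sub, sub_eq_zero,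
    Nat.lt_succ_iff]

lemma mk_span_X_pow_pow_eq_zero {p : PowerSeries R} (hp : constantCoeff p = 0) (k : ℕ) :
    Ideal.Quotient.mk (Ideal.span {(X : PowerSeries R) ^ (k + 1)}) p ^ (k + 1) = 0 := by
  rw [← map_pow, Ideal.Quotient.eq_zero_iff_mem, Ideal.mem_span_singleton]
  exact pow_dvd_pow_of_dvd (X_dvd_iff.mpr hp) _

end Truncation

section ExpPS

variable {B : Type*} [CommRing B] [Algebra ℚ B]

lemma coeff_expPS_eq_coeff_sum {p : PowerSeries B} (hp : constantCoeff p = 0) {j k : ℕ}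
    (hjk : j ≤ k) :
    coeff j (expPS p) =
      coeff j (∑ i ∈ Finset.range (k + 1), (i.factorial : ℚ)⁻¹ • p ^ i) := by
  rw [expPS, coeff_mk, map_sum]
  refine Finset.sum_subset (Finset.range_subset_range.mpr (by omega)) fun i _ hi => ?_
  rw [Finset.mem_range, not_lt] at hi
  rw [coeff_pow_eq_zero_of_lt hp (by omega), smul_zero]

lemma mk_expPS {p : PowerSeries B} (hp : constantCoeff p = 0) (k : ℕ) :
    Ideal.Quotient.mk (Ideal.span {X ^ (k + 1)}) (expPS p) =
      IsNilpotent.exp (Ideal.Quotient.mk _ p) := by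
  rw [IsNilpotent.exp_eq_sum (mk_span_X_pow_pow_eq_zero hp k)]
  simp only [← map_pow, ← Ideal.Quotient.mkₐ_eq_mk ℚ, ← map_smul, ← map_sum]
  simp only [Ideal.Quotient.mkₐ_eq_mk, mk_span_X_pow_eq_mk_iff]
  exact fun j hj => coeff_expPS_eq_coeff_sum hp hj

theorem expPS_add {p q : PowerSeries B} (hp : constantCoeff p = 0)
    (hq : constantCoeff q = 0) : expPS (p + q) = expPS p * expPS q := by
  ext k
  have hpq : constantCoeff (p + q) = 0 := by rw [map_add, hp, hq, add_zero]
  refine (mk_span_X_pow_eq_mk_iff k _ _).mp ?_ k le_rfl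
  rw [map_mul, mk_expPS hp, mk_expPS hq, mk_expPS hpq, map_add,
    IsNilpotent.exp_add_of_commute (Commute.all _ _) ⟨_, mk_span_X_pow_pow_eq_zero hp k⟩
      ⟨_, mk_span_X_pow_pow_eq_zero hq k⟩]

end ExpPS

section CharFun

variable {A B : Type*} [CommRing A] [CommRing B] [Algebra ℚ A] [Algebra ℚ B]

lemma constantCoeff_mapCoeff (f : A →ₗ[ℚ] B) (p : PowerSeries A) :
    constantCoeff (mapCoeff f p) = f (constantCoeff p) := by
  simp only [← coeff_zero_eq_constantCoeff_apply, mapCoeff, coeff_mk]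

lemma mapCoeff_add (f g : A →ₗ[ℚ] B) (p : PowerSeries A) :
    mapCoeff (f + g) p = mapCoeff f p + mapCoeff g p := by
  ext k
  simp only [mapCoeff, coeff_mk, map_add, LinearMap.add_apply]

lemma constantCoeff_logOneAdd (a : A) : constantCoeff (logOneAdd a) = 0 := by
  -- the `k = 0` term of `logOneAdd` is `((-1) ^ 1 / 0) • 1 = 0`
  rw [← coeff_zero_eq_constantCoeff_apply, logOneAdd, coeff_mk, Nat.cast_zero, div_zero,
    zero_smul]

lemma charFun_add (f g : A →ₗ[ℚ] B) (a : A) :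
    charFun (f + g) a = charFun f a * charFun g a := by
  simp only [charFun, mapCoeff_add]
  exact expPS_add (by rw [constantCoeff_mapCoeff, constantCoeff_logOneAdd, map_zero])
    (by rw [constantCoeff_mapCoeff, constantCoeff_logOneAdd, map_zero])

lemma psi_add (f g : A →ₗ[ℚ] B) (a : A) (k : ℕ) :
    psi (f + g) a k =
      ∑ uv ∈ Finset.HasAntidiagonal.antidiagonal k, psi f a uv.1 * psi g a uv.2 := by
  rw [psi, charFun_add, coeff_mul]
  rfl

end CharFun

/-- the sum of an `n`-homomorphism and an `m`-homomorphism is an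
`(n+m)`-homomorphism. -/
theorem stmt11 {A B : Type*} [CommRing A] [CommRing B] [Algebra ℚ A] [Algebra ℚ B]
    (f g : A →ₗ[ℚ] B) (n m : ℕ) (hf : IsNHom f n) (hg : IsNHom g m) :
    IsNHom (f + g) (n + m) := by
  refine ⟨by rw [LinearMap.add_apply, hf.1, hg.1, add_nsmul], fun k hk a => ?_⟩
  rw [psi_add]
  refine Finset.sum_eq_zero fun uv huv => ?_
  have hsum := Finset.HasAntidiagonal.mem_antidiagonal.mp huv
  rcases le_or_gt uv.1 n with h | h
  · rw [hg.2 uv.2 (by omega) a, mul_zero]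
  · rw [hf.2 uv.1 (by omega) a, zero_mul]
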